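/- arXiv:2206.01629 — 2 statements merged into one kernel-verified Lean document; each statement's English description precedes it below -/
import Mathlib

section
/- Fix v_i ∈ S². For the map S(s,v) = s(v - v_i) from (0,∞) × (S² \ {v_i}) (with the product of Lebesgue measure on (0,∞) and surface measure on S²) into ℝ³, the absolute value of the Jacobian determinant at (s,v) equals s²(1 - ⟨v, v_i⟩). -/
open MeasureTheory Set Filter Topology
open scoped ENNReal NNReal

noncomputable section

abbrev E3 : Type := EuclideanSpace ℝ (Fin 3)
abbrev Vs : Type := Metric.sphere (0 : E3) 1

def μV : Measure Vs := (volume : Measure E3).toSphere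

def Gmap (w : E3) : E3 → E3 := fun x => x - ‖x‖ • w
def Uset (w : E3) : Set E3 := {x | x ≠ 0 ∧ (‖x‖⁻¹ • x : E3) ≠ w}
def Amap (u w : E3) : E3 →L[ℝ] E3 :=
  ContinuousLinearMap.id ℝ E3 - (innerSL ℝ u).smulRight w

lemma det_Amap (u w : E3) : (Amap u w).det = 1 - (inner ℝ u w : ℝ) := by
  have hb : (Amap u w).det
      = Matrix.det (LinearMap.toMatrix (EuclideanSpace.basisFun (Fin 3) ℝ).toBasis
          (EuclideanSpace.basisFun (Fin 3) ℝ).toBasis ((Amap u w) : E3 →ₗ[ℝ] E3)) :=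
    (LinearMap.det_toMatrix _ _).symm
  have hM : (LinearMap.toMatrix (EuclideanSpace.basisFun (Fin 3) ℝ).toBasis
          (EuclideanSpace.basisFun (Fin 3) ℝ).toBasis ((Amap u w) : E3 →ₗ[ℝ] E3))
      = 1 + Matrix.replicateCol Unit (fun i => -w i) * Matrix.replicateRow Unit (fun j => u j) := by
    ext i j
    rw [LinearMap.toMatrix_apply]
    simp [Amap, Matrix.one_apply, Matrix.mul_apply, EuclideanSpace.single_apply, real_inner_comm,
      EuclideanSpace.inner_single_right]
    ring
  rw [hb, hM, Matrix.det_one_add_replicateCol_mul_replicateRow]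
  simp [dotProduct, PiLp.inner_apply, RCLike.inner_apply]
  simp [mul_comm, sub_eq_add_neg]

lemma myHasFDerivAt_norm {x : E3} (hx : x ≠ 0) :
    HasFDerivAt (fun y : E3 => ‖y‖) (innerSL ℝ ((‖x‖⁻¹ • x : E3)) : E3 →L[ℝ] ℝ) x := by
  have h1 : HasFDerivAt (fun y : E3 => ‖y‖ ^ 2) (2 • (innerSL ℝ x)) x :=
    (hasStrictFDerivAt_norm_sq x).hasFDerivAt
  have hx2 : ‖x‖ ^ 2 ≠ 0 := pow_ne_zero _ (norm_ne_zero_iff.2 hx)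
  have h2 := (h1.sqrt hx2)
  have h3 : (fun y : E3 => Real.sqrt (‖y‖ ^ 2)) = fun y : E3 => ‖y‖ := by
    ext y; rw [Real.sqrt_sq (norm_nonneg y)]
  rw [h3] at h2
  refine h2.congr_fderiv ?_
  symm
  rw [Real.sqrt_sq (norm_nonneg x)]
  ext y
  simp only [ContinuousLinearMap.smul_apply, innerSL_apply_apply, ContinuousLinearMap.coe_smul',
    Pi.smul_apply]
  rw [real_inner_smul_left]
  field_simp
  have hn : ‖x‖ ≠ 0 := norm_ne_zero_iff.2 hx
  simp only [smul_eq_mul, nsmul_eq_mul, Nat.cast_ofNat]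
  field_simp

lemma hasFDerivAt_Gmap (w : E3) {x : E3} (hx : x ≠ 0) :
    HasFDerivAt (Gmap w) (Amap (‖x‖⁻¹ • x) w) x := by
  exact (hasFDerivAt_id x).sub ((myHasFDerivAt_norm hx).smul_const w)

lemma measurableSet_Uset (w : E3) : MeasurableSet (Uset w) := by
  have h1 : MeasurableSet {x : E3 | x ≠ 0} := (measurableSet_singleton 0).compl
  have h2 : MeasurableSet {x : E3 | (‖x‖⁻¹ • x : E3) ≠ w} := by
    have hm : Measurable (fun x : E3 => (‖x‖⁻¹ • x : E3)) :=
      (measurable_norm.inv).smul measurable_id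
    exact hm (measurableSet_singleton w).compl
  exact h1.inter h2

lemma norm_Gmap_sq (w : E3) (hw : ‖w‖ = 1) (x : E3) :
    ‖Gmap w x‖ ^ 2 = 2 * ‖x‖ * (‖x‖ - (inner ℝ x w : ℝ)) := by
  have hn : ‖(‖x‖ • w : E3)‖ = ‖x‖ := by
    rw [norm_smul, hw, Real.norm_eq_abs, abs_norm, mul_one]
  rw [Gmap, ← real_inner_self_eq_norm_sq]
  simp only [inner_sub_sub_self, real_inner_smul_left, real_inner_smul_right,
    real_inner_self_eq_norm_sq, hw, hn]
  rw [real_inner_comm w x]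
  ring

lemma pos_of_mem_Uset (w : E3) (hw : ‖w‖ = 1) {x : E3} (hx : x ∈ Uset w) :
    0 < ‖x‖ - (inner ℝ x w : ℝ) := by
  have hx0 : (0:ℝ) < ‖x‖ := norm_pos_iff.2 hx.1
  have hGne : Gmap w x ≠ 0 := by
    intro h
    apply hx.2
    have hxw : x = ‖x‖ • w := by rwa [Gmap, sub_eq_zero] at h
    calc (‖x‖⁻¹ • x : E3) = ‖x‖⁻¹ • (‖x‖ • w) := by rw [← hxw]
    _ = w := by rw [smul_smul, inv_mul_cancel₀ (ne_of_gt hx0), one_smul]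
  have h2 : 0 < ‖Gmap w x‖ ^ 2 := pow_pos (norm_pos_iff.2 hGne) 2
  rw [norm_Gmap_sq w hw] at h2
  nlinarith

lemma injOn_Gmap (w : E3) (hw : ‖w‖ = 1) : Set.InjOn (Gmap w) (Uset w) := by
  intro x hx y hy hxy
  have hx0 : (0:ℝ) < ‖x‖ := norm_pos_iff.2 hx.1
  have hy0 : (0:ℝ) < ‖y‖ := norm_pos_iff.2 hy.1
  have h1 : ‖x‖ - (inner ℝ x w : ℝ) = ‖y‖ - (inner ℝ y w : ℝ) := by
    have h := congrArg (fun z => (inner ℝ z w : ℝ)) hxy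
    simp only [Gmap, inner_sub_left, real_inner_smul_left, real_inner_self_eq_norm_sq, hw,
      one_pow, mul_one] at h
    linarith
  have h2 : 2 * ‖x‖ * (‖x‖ - (inner ℝ x w : ℝ)) = 2 * ‖y‖ * (‖y‖ - (inner ℝ y w : ℝ)) := by
    rw [← norm_Gmap_sq w hw, ← norm_Gmap_sq w hw, hxy]
  have hxU := pos_of_mem_Uset w hw hx
  have hyU := pos_of_mem_Uset w hw hy
  have hnn : ‖x‖ = ‖y‖ := by
    rw [← h1] at h2; nlinarith
  have h3 := hxy
  rw [Gmap, Gmap, hnn, sub_left_inj] at h3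
  exact h3

lemma image_Gmap (v_i : Vs) :
    Gmap (v_i : E3) '' Uset (v_i : E3)
      = (fun p : ℝ × Vs => p.1 • ((p.2 : E3) - (v_i : E3))) ''
          (Set.Ioi (0:ℝ) ×ˢ {v : Vs | v ≠ v_i}) := by
  ext z
  constructor
  · rintro ⟨x, ⟨hx0, hxne⟩, rfl⟩
    have hx0' : (0:ℝ) < ‖x‖ := norm_pos_iff.2 hx0
    refine ⟨(‖x‖, ⟨(‖x‖⁻¹ • x : E3), ?_⟩), ⟨mem_Ioi.2 hx0', ?_⟩, ?_⟩
    · simp [mem_sphere_zero_iff_norm, norm_smul, abs_of_pos (inv_pos.2 hx0'),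
        inv_mul_cancel₀ (ne_of_gt hx0')]
    · simpa [Set.mem_setOf_eq, Subtype.ext_iff] using hxne
    · show ‖x‖ • ((‖x‖⁻¹ • x : E3) - (v_i : E3)) = Gmap _ x
      rw [smul_sub, smul_smul, mul_inv_cancel₀ (ne_of_gt hx0'), one_smul, Gmap]
  · rintro ⟨⟨s, v⟩, ⟨hs, hv⟩, rfl⟩
    have hs' : (0:ℝ) < s := hs
    have hvn : ‖(v : E3)‖ = 1 := by simpa using mem_sphere_zero_iff_norm.1 v.2
    have hxn : ‖s • (v : E3)‖ = s := by
      rw [norm_smul, hvn, Real.norm_eq_abs, abs_of_pos hs', mul_one]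
    refine ⟨s • (v : E3), ⟨?_, ?_⟩, ?_⟩
    · exact smul_ne_zero (ne_of_gt hs') (by simp [← norm_pos_iff, hvn])
    · rw [hxn, smul_smul, inv_mul_cancel₀ (ne_of_gt hs'), one_smul]
      simpa [Subtype.ext_iff] using hv
    · rw [Gmap, hxn]; simp [smul_sub]

/-- Jacobian of the change of variables S(s,v) = s(v - v_i). -/
theorem stmt4 (v_i : Vs) (F : E3 → ℝ) (hFc : Continuous F) (hFs : HasCompactSupport F) :
    (∫ s in Set.Ioi (0:ℝ), ∫ v in {v : Vs | v ≠ v_i},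
        F (s • ((v:E3) - (v_i:E3))) * (s ^ 2 * (1 - (inner ℝ (v:E3) (v_i:E3) : ℝ))) ∂μV)
      = ∫ z in (fun p : ℝ × Vs => p.1 • ((p.2 : E3) - (v_i : E3))) ''
          (Set.Ioi (0:ℝ) ×ˢ {v : Vs | v ≠ v_i}), F z := by
  set w : E3 := (v_i : E3) with hwdef
  have hw : ‖w‖ = 1 := mem_sphere_zero_iff_norm.1 v_i.2
  -- main integrand pieces
  set A : Set Vs := {v : Vs | v ≠ v_i} with hA
  have hAmeas : MeasurableSet A := (measurableSet_singleton v_i).compl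
  set Fn : Vs × (Ioi (0:ℝ)) → ℝ :=
    fun p => F ((p.2 : ℝ) • ((p.1 : E3) - w)) * (1 - (inner ℝ (p.1 : E3) w : ℝ)) with hFn
  set g : Vs × (Ioi (0:ℝ)) → ℝ := Set.indicator (A ×ˢ (univ : Set (Ioi (0:ℝ)))) Fn with hg
  set h : E3 → ℝ := Set.indicator (Uset w)
    (fun x => F (Gmap w x) * (1 - (inner ℝ ((‖x‖⁻¹ • x : E3)) w : ℝ))) with hh
  -- facts
  have hudet : ∀ x ∈ Uset w, |(Amap (‖x‖⁻¹ • x) w).det| = 1 - (inner ℝ ((‖x‖⁻¹ • x : E3)) w : ℝ) := by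
    intro x hx
    rw [det_Amap]
    have hx0 : (0:ℝ) < ‖x‖ := norm_pos_iff.2 hx.1
    have hu1 : ‖(‖x‖⁻¹ • x : E3)‖ = 1 := by
      rw [norm_smul, Real.norm_eq_abs, abs_of_pos (inv_pos.2 hx0), inv_mul_cancel₀ hx0.ne']
    have := real_inner_le_norm ((‖x‖⁻¹ • x : E3)) w
    rw [hu1, hw, one_mul] at this
    exact abs_of_nonneg (by linarith)
  -- the derivative within
  have hderiv : ∀ x ∈ Uset w, HasFDerivWithinAt (Gmap w) (Amap (‖x‖⁻¹ • x) w) (Uset w) x :=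
    fun x hx => (hasFDerivAt_Gmap w hx.1).hasFDerivWithinAt
  -- T : the homeomorphism
  have hT := (volume : Measure E3).measurePreserving_homeomorphUnitSphereProd
  have hdim : Module.finrank ℝ E3 - 1 = 2 := by
    rw [finrank_euclideanSpace_fin]
  rw [hdim] at hT
  -- pointwise: g ∘ T = h ∘ val on the subtype
  have hgT : ∀ x : ({0}ᶜ : Set E3), g (homeomorphUnitSphereProd E3 x) = h x.1 := by
    rintro ⟨x, hx⟩
    have hx0 : x ≠ 0 := hx
    have hx0' : (0:ℝ) < ‖x‖ := norm_pos_iff.2 hx0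
    by_cases hc : (‖x‖⁻¹ • x : E3) = w
    · have h1 : g (homeomorphUnitSphereProd E3 ⟨x, hx⟩) = 0 := by
        apply Set.indicator_of_notMem
        simp only [Set.mem_prod, Set.mem_univ, and_true, hA, Set.mem_setOf_eq]
        intro hne
        exact hne (Subtype.ext (by simpa using hc))
      have h2 : h x = 0 := Set.indicator_of_notMem (fun hmem => hmem.2 hc) _
      rw [h1, h2]
    · have hmem : x ∈ Uset w := ⟨hx0, hc⟩
      have h1 : g (homeomorphUnitSphereProd E3 ⟨x, hx⟩) = Fn (homeomorphUnitSphereProd E3 ⟨x, hx⟩) := by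
        apply Set.indicator_of_mem
        simp only [Set.mem_prod, Set.mem_univ, and_true, hA, Set.mem_setOf_eq]
        intro heq
        exact hc (by simpa using congrArg Subtype.val heq)
      rw [h1, hh, Set.indicator_of_mem hmem]
      simp only [hFn, homeomorphUnitSphereProd_apply_fst_coe, homeomorphUnitSphereProd_apply_snd_coe]
      congr 2
      rw [Gmap, smul_sub, smul_smul, mul_inv_cancel₀ hx0'.ne', one_smul]
  -- Step: RHS in terms of Uset
  have stepA : ∫ z in (fun p : ℝ × Vs => p.1 • ((p.2 : E3) - w)) ''
          (Set.Ioi (0:ℝ) ×ˢ {v : Vs | v ≠ v_i}), F z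
      = ∫ x in Uset w, h x := by
    rw [← image_Gmap v_i,
      integral_image_eq_integral_abs_det_fderiv_smul volume (measurableSet_Uset w)
        hderiv (injOn_Gmap w hw) F]
    apply setIntegral_congr_fun (measurableSet_Uset w)
    intro x hx
    dsimp only
    rw [hudet x hx, hh, Set.indicator_of_mem hx, smul_eq_mul, mul_comm]
  -- Step: Uset integral = integral over {0}ᶜ of h
  have stepC : ∫ x in Uset w, h x = ∫ x in ({0}ᶜ : Set E3), h x := by
    have hsub : ({0}ᶜ : Set E3) ∩ Uset w = Uset w :=
      Set.inter_eq_self_of_subset_right (fun x hx => hx.1)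
    rw [hh, setIntegral_indicator (measurableSet_Uset w),
      setIntegral_indicator (measurableSet_Uset w), Set.inter_self, hsub]
  -- Step D+E : to the product measure
  have hT' : MeasurePreserving (homeomorphUnitSphereProd E3)
      (Measure.comap Subtype.val (volume : Measure E3)) (μV.prod (Measure.volumeIoiPow 2)) := hT
  have stepDE : ∫ x in ({0}ᶜ : Set E3), h x
      = ∫ p, g p ∂(μV.prod (Measure.volumeIoiPow 2)) := by
    rw [← integral_subtype_comap (measurableSet_singleton (0:E3)).compl h,
      ← hT'.integral_comp (Homeomorph.measurableEmbedding _) g]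
    exact integral_congr_ae (Filter.Eventually.of_forall (fun x => (hgT x).symm))
  -- Integrability of g
  have hFint : Integrable F (volume : Measure E3) := hFc.integrable_of_hasCompactSupport hFs
  have hgmeas : AEStronglyMeasurable g (μV.prod (Measure.volumeIoiPow 2)) := by
    have hcont : Continuous Fn := by
      apply Continuous.mul
      · exact hFc.comp ((continuous_subtype_val.comp continuous_snd).smul
          ((continuous_subtype_val.comp continuous_fst).sub continuous_const))
      · exact continuous_const.sub
          (Continuous.inner (continuous_subtype_val.comp continuous_fst) continuous_const)
    exact ((hcont.stronglyMeasurable).indicator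
      (hAmeas.prod MeasurableSet.univ)).aestronglyMeasurable
  have hnn : ∀ x, (‖h x‖₊ : ℝ≥0∞) = Set.indicator (Uset w)
      (fun x => ENNReal.ofReal |(Amap (‖x‖⁻¹ • x) w).det|
        * (‖F (Gmap w x)‖₊ : ℝ≥0∞)) x := by
    intro x
    by_cases hx : x ∈ Uset w
    · rw [hh, Set.indicator_of_mem hx, Set.indicator_of_mem hx, hudet x hx]
      have hnneg : (0:ℝ) ≤ 1 - (inner ℝ ((‖x‖⁻¹ • x : E3)) w : ℝ) := by
        have := hudet x hx; rw [← this]; exact abs_nonneg _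
      rw [nnnorm_mul, ENNReal.coe_mul, mul_comm]
      congr 1
      rw [← enorm_eq_nnnorm, Real.enorm_eq_ofReal_abs, abs_of_nonneg hnneg]
    · rw [hh, Set.indicator_of_notMem hx, Set.indicator_of_notMem hx]; simp
  have hsub' : Uset w ∩ ({0}ᶜ : Set E3) = Uset w :=
    Set.inter_eq_self_of_subset_left (fun x hx => hx.1)
  have hlint : ∫⁻ p, (‖g p‖₊ : ℝ≥0∞) ∂(μV.prod (Measure.volumeIoiPow 2)) < ⊤ := by
    rw [← hT'.lintegral_comp_emb (Homeomorph.measurableEmbedding _)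
        (fun p => (‖g p‖₊ : ℝ≥0∞))]
    have e2 : ∫⁻ x : ({0}ᶜ : Set E3), (‖g (homeomorphUnitSphereProd E3 x)‖₊ : ℝ≥0∞)
          ∂(Measure.comap Subtype.val (volume : Measure E3))
        = ∫⁻ x : ({0}ᶜ : Set E3), (‖h x.1‖₊ : ℝ≥0∞)
          ∂(Measure.comap Subtype.val (volume : Measure E3)) :=
      lintegral_congr (fun x => by rw [hgT x])
    rw [e2, lintegral_subtype_comap (measurableSet_singleton (0:E3)).compl
        (fun x => (‖h x‖₊ : ℝ≥0∞))]
    calc ∫⁻ x in ({0}ᶜ : Set E3), (‖h x‖₊ : ℝ≥0∞) ∂volume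
        = ∫⁻ x in ({0}ᶜ : Set E3), Set.indicator (Uset w)
            (fun x => ENNReal.ofReal |(Amap (‖x‖⁻¹ • x) w).det|
              * (‖F (Gmap w x)‖₊ : ℝ≥0∞)) x ∂volume := lintegral_congr (fun x => hnn x)
      _ = ∫⁻ x in Uset w, ENNReal.ofReal |(Amap (‖x‖⁻¹ • x) w).det|
              * (‖F (Gmap w x)‖₊ : ℝ≥0∞) ∂volume := by
          rw [lintegral_indicator (measurableSet_Uset w),
            Measure.restrict_restrict (measurableSet_Uset w), hsub']
      _ = ∫⁻ z in Gmap w '' Uset w, (‖F z‖₊ : ℝ≥0∞) ∂volume :=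
          (lintegral_image_eq_lintegral_abs_det_fderiv_mul volume (measurableSet_Uset w)
            hderiv (injOn_Gmap w hw) (fun z => (‖F z‖₊ : ℝ≥0∞))).symm
      _ ≤ ∫⁻ z, (‖F z‖₊ : ℝ≥0∞) ∂volume := setLIntegral_le_lintegral _ _
      _ < ⊤ := hFint.2
  haveI : IsFiniteMeasure μV := inferInstanceAs (IsFiniteMeasure (volume : Measure E3).toSphere)
  have hgInt : Integrable g (μV.prod (Measure.volumeIoiPow 2)) := ⟨hgmeas, hlint⟩
  -- Step F : Fubini
  set Φ : ℝ → ℝ := fun s => ∫ v in A, F (s • ((v : E3) - w)) * (1 - (inner ℝ (v : E3) w : ℝ)) ∂μV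
    with hΦ
  have hgv : ∀ (s : Ioi (0:ℝ)), (∫ v, g (v, s) ∂μV) = Φ s.1 := by
    intro s
    have : ∀ v : Vs, g (v, s) = Set.indicator A
        (fun v : Vs => F ((s:ℝ) • ((v : E3) - w)) * (1 - (inner ℝ (v : E3) w : ℝ))) v := by
      intro v
      by_cases hv : v ∈ A
      · rw [hg, Set.indicator_of_mem (show (v, s) ∈ A ×ˢ (univ : Set (Ioi (0:ℝ))) from ⟨hv, mem_univ _⟩),
          Set.indicator_of_mem hv]
      · rw [hg, Set.indicator_of_notMem (fun hm => hv hm.1), Set.indicator_of_notMem hv]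
    rw [integral_congr_ae (Filter.Eventually.of_forall this), integral_indicator hAmeas, hΦ]
  have stepF : ∫ p, g p ∂(μV.prod (Measure.volumeIoiPow 2))
      = ∫ s : Ioi (0:ℝ), Φ s.1 ∂(Measure.volumeIoiPow 2) := by
    rw [integral_prod_symm g hgInt]
    exact integral_congr_ae (Filter.Eventually.of_forall (fun s => hgv s))
  -- Step G : unfold volumeIoiPow
  have stepG : ∫ s : Ioi (0:ℝ), Φ s.1 ∂(Measure.volumeIoiPow 2)
      = ∫ s in Ioi (0:ℝ), s ^ 2 * Φ s := by
    simp only [Measure.volumeIoiPow, ENNReal.ofReal]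
    rw [integral_withDensity_eq_integral_smul
        ((measurable_subtype_coe.pow_const _).real_toNNReal) (fun s : Ioi (0:ℝ) => Φ s.1),
      integral_subtype_comap measurableSet_Ioi (fun a : ℝ => Real.toNNReal (a ^ 2) • Φ a)]
    apply setIntegral_congr_fun measurableSet_Ioi
    intro s _
    dsimp only
    rw [NNReal.smul_def, Real.coe_toNNReal _ (sq_nonneg s), smul_eq_mul]
  have final : ∀ s : ℝ, s ^ 2 * Φ s
      = ∫ v in A, F (s • ((v : E3) - w)) * (s ^ 2 * (1 - (inner ℝ (v : E3) w : ℝ))) ∂μV := by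
    intro s
    rw [hΦ, ← integral_const_mul]
    exact integral_congr_ae (Filter.Eventually.of_forall (fun v => by ring))
  calc ∫ s in Set.Ioi (0:ℝ), ∫ v in {v : Vs | v ≠ v_i},
        F (s • ((v:E3) - (v_i:E3))) * (s ^ 2 * (1 - (inner ℝ (v:E3) (v_i:E3) : ℝ))) ∂μV
      = ∫ s in Ioi (0:ℝ), s ^ 2 * Φ s := by
        apply setIntegral_congr_fun measurableSet_Ioi
        intro s _
        dsimp only
        exact (final s).symm
    _ = ∫ s : Ioi (0:ℝ), Φ s.1 ∂(Measure.volumeIoiPow 2) := stepG.symm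
    _ = ∫ p, g p ∂(μV.prod (Measure.volumeIoiPow 2)) := stepF.symm
    _ = ∫ x in ({0}ᶜ : Set E3), h x := stepDE.symm
    _ = ∫ x in Uset w, h x := stepC.symm
    _ = ∫ z in (fun p : ℝ × Vs => p.1 • ((p.2 : E3) - w)) ''
          (Set.Ioi (0:ℝ) ×ˢ {v : Vs | v ≠ v_i}), F z := stepA.symm
end
end

section
/- Let n ≥ 1, t_m > 0, and v_i ∈ S². The set Z = {(v₀, s₀, v₁, s₁, …, v_{n-1}, s_{n-1}) ∈ (S² × [0, t_m])ⁿ : Σ_{j=0}^{n-1} s_j (v_i - v_j) = 0 and Σ_{j=0}^{n-1} s_j ≤ t_m and v₀ ≠ v_i} has measure zero with respect to the product of surface measure on S² and Lebesgue measure on [0, t_m] in each factor. -/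
open MeasureTheory Set Filter Topology

noncomputable section

set_option maxHeartbeats 1000000 in
set_option synthInstance.maxHeartbeats 200000 in
/-- the set of tumbling histories returning to the ballistic point is null. -/
theorem stmt9 (n : ℕ) (hn : 1 ≤ n) (t_m : ℝ) (ht : 0 < t_m) (v_i : Vs) :
    (Measure.pi fun _ : Fin n => μV.prod (volume : Measure ℝ))
      {p : Fin n → Vs × ℝ |
        (∀ j, (p j).2 ∈ Set.Icc (0:ℝ) t_m) ∧
        (∑ j, (p j).2 • ((v_i : E3) - ((p j).1 : E3))) = 0 ∧
        (∑ j, (p j).2) ≤ t_m ∧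
        (p ⟨0, hn⟩).1 ≠ v_i} = 0 := by
  obtain ⟨m, rfl⟩ : ∃ m, n = m + 1 := ⟨n - 1, (Nat.succ_pred_eq_of_pos hn).symm⟩
  have _i1 : IsFiniteMeasure μV := by unfold μV; infer_instance
  have _i2 : SigmaFinite (μV.prod (volume : Measure ℝ)) := inferInstance
  set B : Set (Fin (m+1) → Vs × ℝ) :=
    {p | (∑ j, (p j).2 • ((v_i : E3) - ((p j).1 : E3))) = 0 ∧ (p 0).1 ≠ v_i} with hB
  have hBm : MeasurableSet B := by
    apply MeasurableSet.inter
    · exact measurableSet_eq_fun (by fun_prop) measurable_const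
    · exact ((measurable_fst.comp (measurable_pi_apply 0)) (measurableSet_singleton v_i)).compl
  refine measure_mono_null (t := B)
    (fun p hp => ⟨hp.2.1, by simpa [Fin.mk_zero] using hp.2.2.2⟩) ?_
  set e := MeasurableEquiv.piFinSuccAbove (fun _ : Fin (m+1) => Vs × ℝ) 0 with he
  have hMP := (measurePreserving_piFinSuccAbove
    (fun _ : Fin (m+1) => μV.prod (volume : Measure ℝ)) 0).symm e
  set π : Measure (Fin m → Vs × ℝ) :=
    Measure.pi fun _ => μV.prod (volume : Measure ℝ) with hπ
  set S : Set ((Vs × ℝ) × (Fin m → Vs × ℝ)) := e.symm ⁻¹' B with hS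
  have hSm : MeasurableSet S := e.symm.measurable hBm
  have hmem : ∀ (v : Vs) (s : ℝ) (q : Fin m → Vs × ℝ),
      ((v, s), q) ∈ S ↔
      (s • ((v_i : E3) - (v : E3))
        + ∑ j, (q j).2 • ((v_i : E3) - ((q j).1 : E3)) = 0 ∧ v ≠ v_i) := by
    intro v s q
    simp only [hS, Set.mem_preimage, he, MeasurableEquiv.piFinSuccAbove_symm_apply, hB,
      Set.mem_setOf_eq, Fin.insertNthEquiv_zero, Fin.consEquiv_apply, Fin.sum_univ_succ, Fin.cons_zero, Fin.cons_succ]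
  have key : (Measure.pi fun _ : Fin (m+1) => μV.prod (volume : Measure ℝ)) B
      = ((μV.prod (volume : Measure ℝ)).prod π) S :=
    (hMP.measure_preimage hBm.nullMeasurableSet).symm
  rw [key, ← Measure.prod_swap,
    Measure.map_apply measurable_swap hSm,
    Measure.measure_prod_null (measurable_swap hSm)]
  refine ae_of_all _ fun q => ?_
  show (μV.prod (volume : Measure ℝ)) (Prod.mk q ⁻¹' (Prod.swap ⁻¹' S)) = 0
  have hq : Prod.mk q ⁻¹' (Prod.swap ⁻¹' S) = {a : Vs × ℝ | (a, q) ∈ S} := rfl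
  rw [hq, Measure.measure_prod_null]
  · refine ae_of_all _ fun v => ?_
    show (volume : Measure ℝ) (Prod.mk v ⁻¹' {a : Vs × ℝ | (a, q) ∈ S}) = 0
    have hslice : (Prod.mk v ⁻¹' {a : Vs × ℝ | (a, q) ∈ S}) =
        {s : ℝ | s • ((v_i : E3) - (v : E3))
          + ∑ j, (q j).2 • ((v_i : E3) - ((q j).1 : E3)) = 0 ∧ v ≠ v_i} := by
      ext s; exact hmem v s q
    rw [hslice]
    by_cases hv : v = v_i
    · simp [hv]
    · have hw : (v_i : E3) - (v : E3) ≠ 0 :=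
        sub_ne_zero.mpr fun h => hv (Subtype.coe_injective h.symm)
      refine Set.Subsingleton.measure_zero ?_ _
      intro s₁ hs₁ s₂ hs₂
      have h12 : s₁ • ((v_i : E3) - (v : E3)) = s₂ • ((v_i : E3) - (v : E3)) :=
        (eq_neg_of_add_eq_zero_left hs₁.1).trans (eq_neg_of_add_eq_zero_left hs₂.1).symm
      exact smul_left_injective ℝ hw h12
  · exact measurable_prodMk_left (measurable_swap hSm)
end
end
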